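/- Let T be a bounded linear operator on L² induced by a K⁰-kernel 𝐓 satisfying condition (iv), let {βₙ} be a complex sequence with βₙ → 0, and set λₙ(λ) = λ(1 − βₙλ)⁻¹. Then for every compact subset K̃ of ∇_s({βₙI + T̃ₙ}) and each fixed point (s,t) ∈ ℝ², sup_{λ∈K̃} |𝐓_{n|λₙ(λ)}(s,t) − 𝐓_{|λ}(s,t)| → 0 as n → ∞ (the quantity being defined for all sufficiently large n). -/

import Mathlib

open MeasureTheory Filter Topology ContinuousLinearMap
open scoped ENNReal NNReal

noncomputable section

/-- `L²(ℝ)`, the complex Hilbert space of square-integrable functions on `ℝ`. -/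
abbrev L2 : Type := MeasureTheory.Lp ℂ 2 (MeasureTheory.volume : MeasureTheory.Measure ℝ)

/-- Bounded linear operators on `L²`. -/
abbrev L2op : Type := L2 →L[ℂ] L2

/-- `T` is the integral operator induced by the kernel `K`:
`(Tf)(s) = ∫ K(s,t) f(t) dt` for every `f ∈ L²` and almost every `s`. -/
def IsInducedBy (T : L2op) (K : ℝ → ℝ → ℂ) : Prop :=
  ∀ f : L2, ∀ᵐ s : ℝ, (T f : ℝ → ℂ) s = ∫ t : ℝ, K s t * (f : ℝ → ℂ) t

/-- `K` is a `K⁰`-kernel with associated Carleman functions `kt`, `kt'`: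
`kt s = conj (K s ·)` and `kt' s = K · s` as elements of `L²`, the kernel is
continuous and vanishes at infinity, and both Carleman functions are continuous
and vanish at infinity in `L²`-norm. -/
structure IsK0Kernel (K : ℝ → ℝ → ℂ) (kt kt' : ℝ → L2) : Prop where
  repr_t : ∀ s : ℝ, (kt s : ℝ → ℂ) =ᵐ[volume] fun x => (starRingEnd ℂ) (K s x)
  repr_t' : ∀ s : ℝ, (kt' s : ℝ → ℂ) =ᵐ[volume] fun x => K x s
  cont : Continuous fun p : ℝ × ℝ => K p.1 p.2
  vanish : Tendsto (fun p : ℝ × ℝ => K p.1 p.2) (cocompact (ℝ × ℝ)) (𝓝 0)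
  cont_t : Continuous kt
  vanish_t : Tendsto kt (cocompact ℝ) (𝓝 0)
  cont_t' : Continuous kt'
  vanish_t' : Tendsto kt' (cocompact ℝ) (𝓝 0)

/-- The set `Π(T)` of regular values of `T`: those `λ` for which `I - λT` is invertible. -/
def regularSet (T : L2op) : Set ℂ := {lam : ℂ | IsUnit (1 - lam • T)}

/-- The resolvent `R_λ(T) = (I - λT)⁻¹` (junk value `0` if `λ ∉ Π(T)`). -/
def res (T : L2op) (lam : ℂ) : L2op := Ring.inverse (1 - lam • T)

/-- The Fredholm resolvent `T_{|λ} = T R_λ(T)`. -/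
def fres (T : L2op) (lam : ℂ) : L2op := T * res T lam

/-- The region of boundedness `∇_b({Sₙ})`. -/
def nablaB (S : ℕ → L2op) : Set ℂ :=
  {ζ : ℂ | ζ ≠ 0 ∧ ∃ M : ℝ, 0 < M ∧ ∃ N : ℕ, ∀ n > N,
      ζ ∈ regularSet (S n) ∧ ‖fres (S n) ζ‖ ≤ M}

/-- The region of strong convergence `∇_s({Sₙ})`: the `ζ ∈ ∇_b({Sₙ})` such that
the Fredholm resolvents `S_{n|ζ}` converge in the strong operator topology. -/
def nablaS (S : ℕ → L2op) : Set ℂ :=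
  {ζ : ℂ | ζ ∈ nablaB S ∧
    ∀ f : L2, ∃ g : L2, Tendsto (fun n => fres (S n) ζ f) atTop (𝓝 g)}

/-- Nuclear (trace class) operator on `L²`. -/
def IsNuclear (T : L2op) : Prop :=
  ∃ g h : ℕ → L2, Summable (fun k => ‖g k‖ * ‖h k‖) ∧
    ∀ f : L2, T f = ∑' k : ℕ, (inner ℂ f (g k) : ℂ) • h k

/-- The characteristic function `χ` of the interval `(-τ, τ)`, with complex values. -/
def chi (t : ℝ) (x : ℝ) : ℂ := Set.indicator (Set.Ioo (-t) t) 1 x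

/-- Condition (iv) for a `K⁰`-kernel `K` inducing `T`: the positive reals `τ n`
strictly increase to `+∞`, `P n` is the orthogonal projection given by multiplication
by `χₙ = chi (τ n)`, the subkernels `Kₙ(s,t) = χₙ(s)K(s,t)` and
`K̃ₙ(s,t) = χₙ(s)K(s,t)χₙ(t)` are `K⁰`-kernels, and the induced operators
`Tₙ = PₙT` and `T̃ₙ = PₙTPₙ` are nuclear. -/
structure ConditionIV (K : ℝ → ℝ → ℂ) (T : L2op) (tau : ℕ → ℝ) (P : ℕ → L2op) : Prop where
  pos : ∀ n, 0 < tau n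
  mono : StrictMono tau
  tendsto_top : Tendsto tau atTop atTop
  proj : ∀ n, ∀ f : L2, (P n f : ℝ → ℂ) =ᵐ[volume] fun x => chi (tau n) x * (f : ℝ → ℂ) x
  subker : ∀ n, ∃ kt kt' : ℝ → L2, IsK0Kernel (fun s t => chi (tau n) s * K s t) kt kt'
  subker' : ∀ n, ∃ kt kt' : ℝ → L2,
      IsK0Kernel (fun s t => chi (tau n) s * K s t * chi (tau n) t) kt kt'
  nuclear : ∀ n, IsNuclear (P n * T)
  nuclear' : ∀ n, IsNuclear (P n * T * P n)

/-- `λₙ(λ) = λ(1 - βₙλ)⁻¹`. -/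
def lamn (b : ℕ → ℂ) (lam : ℂ) (n : ℕ) : ℂ := lam * (1 - b n * lam)⁻¹

/-- The resolvent kernel for `K` at `λ` built from the resolvent Carleman function
`𝐭'_{|λ}(t) = R_λ(T)(kt' t)`:  `𝐓_{|λ}(s,t) = λ⟨𝐭'_{|λ}(t), 𝐭(s)⟩ + 𝐓(s,t)`
(the paper's inner product `⟨a,b⟩ = ∫ a conj b` is `inner b a` in Mathlib). -/
def resKer (T : L2op) (K : ℝ → ℝ → ℂ) (kt kt' : ℝ → L2) (lam : ℂ) (s t : ℝ) : ℂ :=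
  lam * (inner ℂ (kt s) (res T lam (kt' t)) : ℂ) + K s t

/-- The resolvent kernel for the subkernel `Kₙ` at `λ`:
`𝐓_{n|λ}(s,t) = λ χₙ(s) ⟨𝐭'_{n|λ}(t), 𝐭(s)⟩ + 𝐓ₙ(s,t)`, where
`𝐭'_{n|λ}(t) = R_λ(Tₙ) Pₙ (kt' t)` and `𝐓ₙ(s,t) = χₙ(s) 𝐓(s,t)`. -/
def resKerN (T : L2op) (K : ℝ → ℝ → ℂ) (kt kt' : ℝ → L2) (taun : ℝ) (Pn : L2op)
    (lam : ℂ) (s t : ℝ) : ℂ :=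
  lam * chi taun s * (inner ℂ (kt s) (res (Pn * T) lam (Pn (kt' t))) : ℂ) + chi taun s * K s t

/-- `R` is a resolvent kernel for the `K⁰`-kernel `K` at `λ` (Definition 2 of the paper):
`R` is a `K⁰`-kernel satisfying the two simultaneous integral equations and the
square-integrability condition. -/
def IsResolventKernel (K : ℝ → ℝ → ℂ) (lam : ℂ) (R : ℝ → ℝ → ℂ) : Prop :=
  (∃ rt rt' : ℝ → L2, IsK0Kernel R rt rt') ∧
  (∀ s t : ℝ, R s t - lam * ∫ x : ℝ, K s x * R x t = K s t) ∧
  (∀ s t : ℝ, R s t - lam * ∫ x : ℝ, R s x * K x t = K s t) ∧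
  (∀ f : L2, ∫⁻ s : ℝ, ((‖∫ t : ℝ, R s t * (f : ℝ → ℂ) t‖₊ : ℝ≥0) : ℝ≥0∞) ^ 2 < ⊤)

/-!
The substitution `λₙ(λ) = λ(1 - βₙλ)⁻¹` is what links the compression `PₙT` to
`Sₙ = βₙI + PₙTPₙ`: `I - λSₙ = (1 - βₙλ)(I - λₙ(λ) PₙTPₙ)`, and the push-through identity
`R_μ(PₙT)Pₙ = Pₙ R_μ(PₙTPₙ)` turns this, once `|s| < τₙ`, into
`𝐓_{n|λₙ(λ)}(s,t) - 𝐓_{|λ}(s,t) = λ⟨Pₙ R_λ(Sₙ) 𝐭′(t) - R_λ(T) 𝐭′(t), 𝐭(s)⟩`.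

Multiplication by `χₙ` tends strongly to `I` by dominated convergence, so `Sₙ → T` strongly with
bounded norms. A Neumann-series perturbation and compactness bound the Fredholm resolvents of `Sₙ`
uniformly on `K̃`, and strong limits of the resolvents show that `K̃ ⊆ Π(T)`. Finally, with
`w_λ = R_λ(T)𝐭′(t)`,
`Pₙ R_λ(Sₙ)𝐭′(t) - w_λ = λ Pₙ R_λ(Sₙ)(Sₙ - T)w_λ + (Pₙ - I)w_λ`, and the bounded strongly
convergent sequences `Sₙ`, `Pₙ` converge uniformly on the compact set `{w_λ : λ ∈ K̃}`.
-/

section RingInverse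

variable {A : Type*} [Ring A]

/-- Jacobson's lemma, read off from `spectrum.unit_mem_mul_comm` at `r = 1` over `ℤ`. -/
theorem isUnit_one_sub_mul_comm {a b : A} : IsUnit (1 - a * b) ↔ IsUnit (1 - b * a) := by
  simpa [spectrum.mem_iff] using
    (spectrum.unit_mem_mul_comm (R := ℤ) (a := a) (b := b) (r := 1)).not

theorem Ring.inverse_one_sub_mul_mul (a b : A) :
    Ring.inverse (1 - b * a) * b = b * Ring.inverse (1 - a * b) := by
  by_cases h : IsUnit (1 - a * b)
  · have h' := isUnit_one_sub_mul_comm.1 h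
    calc Ring.inverse (1 - b * a) * b
        = Ring.inverse (1 - b * a) * (b * (1 - a * b)) * Ring.inverse (1 - a * b) := by
          rw [← mul_assoc, mul_assoc _ _ (Ring.inverse _), Ring.mul_inverse_cancel _ h, mul_one]
      _ = Ring.inverse (1 - b * a) * ((1 - b * a) * b) * Ring.inverse (1 - a * b) := by
          congr 2; noncomm_ring
      _ = b * Ring.inverse (1 - a * b) := by rw [Ring.inverse_mul_cancel_left _ _ h']
  · rw [Ring.inverse_non_unit _ h, Ring.inverse_non_unit _ (mt isUnit_one_sub_mul_comm.2 h),
      zero_mul, mul_zero]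

theorem Ring.inverse_smul {𝕜 : Type*} [Field 𝕜] [Algebra 𝕜 A] {c : 𝕜} (hc : c ≠ 0) (x : A) :
    Ring.inverse (c • x) = c⁻¹ • Ring.inverse x := by
  have hinv : Ring.inverse (algebraMap 𝕜 A c) = algebraMap 𝕜 A c⁻¹ := by
    simpa using Ring.inverse_unit (Units.map (algebraMap 𝕜 A : 𝕜 →* A) (Units.mk0 c hc))
  rw [Algebra.smul_def, Ring.inverse_mul (Or.inl ((isUnit_iff_ne_zero.2 hc).map _)), hinv,
    ← Algebra.commutes, ← Algebra.smul_def]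

end RingInverse

theorem NormedRing.norm_inverse_one_sub_le {R : Type*} [NormedRing R] [HasSummableGeomSeries R]
    {t : R} (ht : ‖t‖ < 1) : ‖Ring.inverse (1 - t)‖ ≤ ‖(1 : R)‖ - 1 + (1 - ‖t‖)⁻¹ := by
  rw [NormedRing.inverse_one_sub t ht]
  exact tsum_geometric_le_of_norm_lt_one t ht

section StrongConvergence

variable {𝕜 E F : Type*} [NontriviallyNormedField 𝕜] [NormedAddCommGroup E] [NormedSpace 𝕜 E]
  [NormedAddCommGroup F] [NormedSpace 𝕜 F]

theorem tendsto_apply_of_tendsto_of_norm_le {A : ℕ → E →L[𝕜] F} {A' : E →L[𝕜] F} {C : ℝ}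
    (hC : ∀ᶠ n in atTop, ‖A n‖ ≤ C) (hA : ∀ x, Tendsto (fun n => A n x) atTop (𝓝 (A' x)))
    {x : ℕ → E} {x' : E} (hx : Tendsto x atTop (𝓝 x')) :
    Tendsto (fun n => A n (x n)) atTop (𝓝 (A' x')) := by
  have hAx := hA x'
  rw [tendsto_iff_norm_sub_tendsto_zero] at hx hAx ⊢
  have hbound : ∀ᶠ n in atTop, ‖A n (x n) - A' x'‖ ≤ C * ‖x n - x'‖ + ‖A n x' - A' x'‖ := by
    filter_upwards [hC] with n hn
    calc ‖A n (x n) - A' x'‖ = ‖A n (x n - x') + (A n x' - A' x')‖ := by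
          rw [map_sub, sub_add_sub_cancel]
      _ ≤ ‖A n (x n - x')‖ + ‖A n x' - A' x'‖ := norm_add_le _ _
      _ ≤ C * ‖x n - x'‖ + ‖A n x' - A' x'‖ := by grw [(A n).le_of_opNorm_le hn]
  refine squeeze_zero' (.of_forall fun n => norm_nonneg _) hbound ?_
  simpa using (hx.const_mul C).add hAx

theorem mul_eq_one_of_tendsto {X Y : ℕ → E →L[𝕜] E} {X' Y' : E →L[𝕜] E} {C : ℝ}
    (hC : ∀ᶠ n in atTop, ‖X n‖ ≤ C) (hX : ∀ x, Tendsto (fun n => X n x) atTop (𝓝 (X' x)))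
    (hY : ∀ x, Tendsto (fun n => Y n x) atTop (𝓝 (Y' x))) (h : ∀ᶠ n in atTop, X n * Y n = 1) :
    X' * Y' = 1 := by
  ext x
  refine tendsto_nhds_unique (tendsto_apply_of_tendsto_of_norm_le hC hX (hY x))
    (tendsto_const_nhds.congr' ?_)
  filter_upwards [h] with n hn
  rw [← mul_apply_eq_comp, hn, one_apply_eq_self]

theorem isUnit_of_tendsto [CompleteSpace E] {X : ℕ → E →L[𝕜] E} {X' : E →L[𝕜] E} {C C' : ℝ}
    (hC : ∀ᶠ n in atTop, ‖X n‖ ≤ C) (hX : ∀ x, Tendsto (fun n => X n x) atTop (𝓝 (X' x)))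
    (hunit : ∀ᶠ n in atTop, IsUnit (X n)) (hC' : ∀ᶠ n in atTop, ‖Ring.inverse (X n)‖ ≤ C')
    (hinv : ∀ x, ∃ y, Tendsto (fun n => Ring.inverse (X n) x) atTop (𝓝 y)) :
    IsUnit X' := by
  choose g hg using hinv
  let Y' := continuousLinearMapOfTendsto (fun n => Ring.inverse (X n)) (tendsto_pi_nhds.2 hg)
  have hY : ∀ x, Tendsto (fun n => Ring.inverse (X n) x) atTop (𝓝 (Y' x)) := hg
  refine ⟨⟨X', Y', mul_eq_one_of_tendsto hC hX hY ?_, mul_eq_one_of_tendsto hC' hY hX ?_⟩, rfl⟩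
  · exact hunit.mono fun n hn => Ring.mul_inverse_cancel _ hn
  · exact hunit.mono fun n hn => Ring.inverse_mul_cancel _ hn

theorem tendstoUniformlyOn_of_tendsto_of_norm_le {ι : Type*} {p : Filter ι}
    {A : ι → E →L[𝕜] F} {A' : E → F} {C : ℝ} (hC : ∀ i, ‖A i‖ ≤ C)
    (hA : ∀ x, Tendsto (fun i => A i x) p (𝓝 (A' x))) {W : Set E} (hW : IsCompact W) :
    TendstoUniformlyOn (fun i => ⇑(A i)) A' p W := by
  have hequi : Equicontinuous (fun i => ⇑(A i)) :=
    (show (∃ C, ∀ i, ‖A i‖ ≤ C) ↔ _ from (NormedSpace.equicontinuous_TFAE A).out 5 1).1 ⟨C, hC⟩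
  have := (EquicontinuousOn.tendsto_uniformOnFun_iff_pi (𝔖 := {K | IsCompact K})
    (fun K hK => hK) (Set.sUnion_eq_univ_iff.2 fun x => ⟨{x}, isCompact_singleton, rfl⟩)
    (fun K _ => hequi.equicontinuousOn K) p A').2 (tendsto_pi_nhds.2 hA)
  exact UniformOnFun.tendsto_iff_tendstoUniformlyOn.1 this W hW

end StrongConvergence

section UniformConvergence

variable {ι X E G : Type*} {p : Filter ι} {s : Set X} [SeminormedAddCommGroup E]
  [SeminormedAddCommGroup G]

theorem TendstoUniformlyOn.of_norm_sub_le {F : ι → X → E} {f : X → E} {H : ι → X → G}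
    {h : X → G} {C : ℝ} (hH : TendstoUniformlyOn H h p s)
    (hle : ∀ᶠ i in p, ∀ x ∈ s, ‖F i x - f x‖ ≤ C * ‖H i x - h x‖) :
    TendstoUniformlyOn F f p s := by
  refine Metric.tendstoUniformlyOn_iff.2 fun ε hε => ?_
  have hε' : 0 < ε / (|C| + 1) := by positivity
  filter_upwards [hle, Metric.tendstoUniformlyOn_iff.1 hH _ hε'] with i hi hi' x hx
  rw [dist_comm, dist_eq_norm]
  have hHx : ‖H i x - h x‖ < ε / (|C| + 1) := by rw [← dist_eq_norm, dist_comm]; exact hi' x hx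
  calc ‖F i x - f x‖ ≤ |C| * ‖H i x - h x‖ := (hi x hx).trans (by gcongr; exact le_abs_self C)
    _ ≤ |C| * (ε / (|C| + 1)) := by gcongr
    _ < (|C| + 1) * (ε / (|C| + 1)) := by gcongr; linarith
    _ = ε := by field_simp

theorem TendstoUniformlyOn.tendsto_biSup_norm_sub {F : ι → X → E} {f : X → E}
    (h : TendstoUniformlyOn F f p s) :
    Tendsto (fun i => ⨆ x ∈ s, ‖F i x - f x‖) p (𝓝 0) := by
  refine Metric.tendsto_nhds.2 fun ε hε => ?_
  filter_upwards [Metric.tendstoUniformlyOn_iff.1 h (ε / 2) (half_pos hε)] with i hi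
  have hnonneg : 0 ≤ ⨆ x ∈ s, ‖F i x - f x‖ :=
    Real.iSup_nonneg fun x => Real.iSup_nonneg fun _ => norm_nonneg _
  have hle : ⨆ x ∈ s, ‖F i x - f x‖ ≤ ε / 2 :=
    Real.iSup_le (fun x => Real.iSup_le (fun hx => by
      rw [← dist_eq_norm, dist_comm]; exact (hi x hx).le) (half_pos hε).le) (half_pos hε).le
  rw [Real.dist_eq, sub_zero, abs_of_nonneg hnonneg]
  linarith

end UniformConvergence

theorem tendsto_eLpNorm_sub_of_dominated {α β : Type*} [MeasurableSpace α] {μ : Measure α}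
    [NormedAddCommGroup β] {p : ℝ≥0∞} (hp : 1 ≤ p) (hp' : p ≠ ∞) {f : ℕ → α → β} {g : α → β}
    (hf : ∀ n, AEStronglyMeasurable (f n) μ) (hg : MemLp g p μ) (hdom : ∀ n x, ‖f n x‖ ≤ ‖g x‖)
    (hlim : ∀ᵐ x ∂μ, Tendsto (fun n => f n x) atTop (𝓝 (g x))) :
    Tendsto (fun n => eLpNorm (f n - g) p μ) atTop (𝓝 0) := by
  have hind : ∀ n (s : Set α) x, ‖s.indicator (f n) x‖ ≤ ‖s.indicator g x‖ := fun n s x => by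
    simp only [norm_indicator_eq_indicator_norm]
    exact Set.indicator_le_indicator (hdom n x)
  refine tendsto_Lp_of_tendsto_ae hp hp' hf hg (fun ε hε => ?_) (fun ε hε => ?_) hlim
  · obtain ⟨δ, hδ, h⟩ := unifIntegrable_const (ι := ℕ) hp hp' hg hε
    exact ⟨δ, hδ, fun n s hs hμs => (eLpNorm_mono (hind n s)).trans (h n s hs hμs)⟩
  · obtain ⟨s, hμs, h⟩ := unifTight_const (ι := ℕ) hp' hg hε
    exact ⟨s, hμs, fun n => (eLpNorm_mono (hind n sᶜ)).trans (h n)⟩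

theorem norm_chi_le_one (τ x : ℝ) : ‖chi τ x‖ ≤ 1 := by
  by_cases h : x ∈ Set.Ioo (-τ) τ <;> simp [chi, h]

theorem chi_mul_self (τ x : ℝ) : chi τ x * chi τ x = chi τ x := by
  by_cases h : x ∈ Set.Ioo (-τ) τ <;> simp [chi, h]

theorem chi_eq_one {τ x : ℝ} (h : |x| < τ) : chi τ x = 1 := by
  rw [chi, Set.indicator_of_mem (show x ∈ Set.Ioo (-τ) τ from abs_lt.1 h)]
  rfl

theorem measurable_chi (τ : ℝ) : Measurable (chi τ) :=
  measurable_const.indicator measurableSet_Ioo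

def IsMulByChi (P : L2op) (τ : ℝ) : Prop :=
  ∀ f : L2, (P f : ℝ → ℂ) =ᵐ[volume] fun x => chi τ x * (f : ℝ → ℂ) x

namespace IsMulByChi

variable {P : L2op} {τ : ℝ}

theorem opNorm_le_one (hP : IsMulByChi P τ) : ‖P‖ ≤ 1 :=
  P.opNorm_le_bound zero_le_one fun f => by
    rw [one_mul]
    refine Lp.norm_le_norm_of_ae_le ((hP f).mono fun x hx => ?_)
    rw [hx, norm_mul]
    exact mul_le_of_le_one_left (norm_nonneg _) (norm_chi_le_one τ x)

theorem mul_self (hP : IsMulByChi P τ) : P * P = P := by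
  ext f
  rw [mul_apply_eq_comp]
  filter_upwards [hP (P f), hP f] with x h h'
  rw [h, h', ← mul_assoc, chi_mul_self]

end IsMulByChi

theorem tendsto_apply_of_isMulByChi {P : ℕ → L2op} {τ : ℕ → ℝ} (hP : ∀ n, IsMulByChi (P n) (τ n))
    (hτ : Tendsto τ atTop atTop) (f : L2) : Tendsto (fun n => P n f) atTop (𝓝 f) := by
  rw [Lp.tendsto_Lp_iff_tendsto_eLpNorm']
  have hdc := tendsto_eLpNorm_sub_of_dominated one_le_two ENNReal.ofNat_ne_top
    (f := fun n x => chi (τ n) x * (f : ℝ → ℂ) x)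
    (fun n => (measurable_chi _).aestronglyMeasurable.mul (Lp.aestronglyMeasurable f))
    (Lp.memLp f)
    (fun n x => by rw [norm_mul]; exact mul_le_of_le_one_left (norm_nonneg _) (norm_chi_le_one _ x))
    (.of_forall fun x => tendsto_const_nhds.congr' <|
      (hτ.eventually_gt_atTop |x|).mono fun n hn => by simp [chi_eq_one hn])
  exact hdc.congr fun n => eLpNorm_congr_ae ((hP n f).sub .rfl).symm

section Resolvent

theorem norm_one_L2op_le : ‖(1 : L2op)‖ ≤ 1 := ContinuousLinearMap.norm_id_le

theorem res_eq_one_add_smul_fres {T : L2op} {z : ℂ} (hz : z ∈ regularSet T) :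
    res T z = 1 + z • fres T z := by
  have h : (1 - z • T) * res T z = 1 := Ring.mul_inverse_cancel _ hz
  rw [sub_mul, one_mul, smul_mul_assoc] at h
  rw [fres, ← h, sub_add_cancel]

theorem norm_res_le {T : L2op} {z : ℂ} (hz : z ∈ regularSet T) :
    ‖res T z‖ ≤ 1 + ‖z‖ * ‖fres T z‖ := by
  rw [res_eq_one_add_smul_fres hz]
  exact (norm_add_le _ _).trans (add_le_add norm_one_L2op_le (norm_smul _ _).le)

theorem mem_regularSet_of_norm_sub_mul_le {S : L2op} {z z' : ℂ} {M : ℝ}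
    (hz : z ∈ regularSet S) (hM : ‖fres S z‖ ≤ M) (hd : ‖z' - z‖ * M ≤ 1 / 2) :
    z' ∈ regularSet S ∧ ‖fres S z'‖ ≤ 2 * M := by
  set t : L2op := (z' - z) • fres S z
  have ht : ‖t‖ ≤ 1 / 2 := (norm_smul _ _).le.trans ((by gcongr : _ ≤ ‖z' - z‖ * M).trans hd)
  have ht' : ‖t‖ < 1 := by linarith
  have hfac : 1 - z' • S = (1 - t) * (1 - z • S) := by
    rw [sub_mul, one_mul, smul_mul_assoc, fres, res, mul_assoc, Ring.inverse_mul_cancel _ hz,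
      mul_one, sub_sub, ← add_smul, add_sub_cancel]
  have hinv : ‖Ring.inverse (1 - t)‖ ≤ 2 := by
    have := NormedRing.norm_inverse_one_sub_le ht'
    have h2 : (1 - ‖t‖)⁻¹ ≤ 2 := inv_le_of_inv_le₀ (by norm_num) (by linarith)
    linarith [norm_one_L2op_le]
  refine ⟨show IsUnit (1 - z' • S) from hfac ▸ (isUnit_one_sub_of_norm_lt_one ht').mul hz, ?_⟩
  have hfres : fres S z' = fres S z * Ring.inverse (1 - t) := by
    rw [fres, res, hfac, Ring.inverse_mul (Or.inr hz), ← mul_assoc]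
    rfl
  rw [hfres, mul_comm 2 M]
  exact (norm_mul_le _ _).trans (mul_le_mul hM hinv (norm_nonneg _) ((norm_nonneg _).trans hM))

theorem exists_fres_bound_of_isCompact {S : ℕ → L2op} {Kc : Set ℂ} (hK : IsCompact Kc)
    (hsub : Kc ⊆ nablaB S) :
    ∃ M, ∀ᶠ n in atTop, ∀ z ∈ Kc, z ∈ regularSet (S n) ∧ ‖fres (S n) z‖ ≤ M := by
  refine hK.induction_on (p := fun U =>
      ∃ M, ∀ᶠ n in atTop, ∀ z ∈ U, z ∈ regularSet (S n) ∧ ‖fres (S n) z‖ ≤ M)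
    ⟨0, by simp⟩ (fun U V hUV ⟨M, hM⟩ => ⟨M, hM.mono fun n h z hz => h z (hUV hz)⟩)
    (fun U V ⟨M, hM⟩ ⟨M', hM'⟩ => ⟨max M M', ?_⟩) fun z₀ hz₀ => ?_
  · filter_upwards [hM, hM'] with n h h' z hz
    rcases hz with hz | hz
    · exact ⟨(h z hz).1, (h z hz).2.trans (le_max_left _ _)⟩
    · exact ⟨(h' z hz).1, (h' z hz).2.trans (le_max_right _ _)⟩
  · obtain ⟨-, M, hM, N, hN⟩ := hsub hz₀
    refine ⟨Metric.ball z₀ (1 / (2 * M)),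
      mem_nhdsWithin_of_mem_nhds (Metric.ball_mem_nhds _ (by positivity)), 2 * M, ?_⟩
    filter_upwards [eventually_gt_atTop N] with n hn z hz
    refine mem_regularSet_of_norm_sub_mul_le (hN n hn).1 (hN n hn).2 ?_
    rw [Metric.mem_ball, dist_eq_norm] at hz
    calc ‖z - z₀‖ * M ≤ 1 / (2 * M) * M := by gcongr
      _ = 1 / 2 := by field_simp

theorem exists_res_bound_of_isCompact {S : ℕ → L2op} {Kc : Set ℂ} (hK : IsCompact Kc)
    (hsub : Kc ⊆ nablaB S) :
    ∃ R, ∀ᶠ n in atTop, ∀ z ∈ Kc, z ∈ regularSet (S n) ∧ ‖res (S n) z‖ ≤ R := by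
  obtain ⟨M, hM⟩ := exists_fres_bound_of_isCompact hK hsub
  obtain ⟨D, hD⟩ := hK.isBounded.exists_norm_le
  refine ⟨1 + D * M, hM.mono fun n h z hz => ⟨(h z hz).1, (norm_res_le (h z hz).1).trans ?_⟩⟩
  grw [(h z hz).2, hD z hz]
  exact (norm_nonneg _).trans (h z hz).2

theorem mem_regularSet_of_mem_nablaS {S : ℕ → L2op} {T : L2op} {C : ℝ} (hC : ∀ n, ‖S n‖ ≤ C)
    (hS : ∀ f, Tendsto (fun n => S n f) atTop (𝓝 (T f))) {z : ℂ} (hz : z ∈ nablaS S) :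
    z ∈ regularSet T := by
  obtain ⟨⟨-, M, -, N, hN⟩, hconv⟩ := hz
  have hev : ∀ᶠ n in atTop, z ∈ regularSet (S n) ∧ ‖fres (S n) z‖ ≤ M :=
    (eventually_gt_atTop N).mono hN
  refine isUnit_of_tendsto (C := 1 + ‖z‖ * C) (C' := 1 + ‖z‖ * M) (.of_forall fun n => ?_)
    (fun f => ?_) (hev.mono fun n h => h.1) (hev.mono fun n h => ?_) fun f => ?_
  · exact (norm_sub_le _ _).trans (add_le_add norm_one_L2op_le
      ((norm_smul _ _).le.trans (by gcongr; exact hC n)))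
  · simpa using tendsto_const_nhds.sub ((hS f).const_smul z)
  · exact (norm_res_le h.1).trans (by gcongr; exact h.2)
  · obtain ⟨g, hg⟩ := hconv f
    refine ⟨f + z • g, (tendsto_const_nhds.add (hg.const_smul z)).congr' ?_⟩
    filter_upwards [hev] with n h
    change _ = res (S n) z f
    simp [res_eq_one_add_smul_fres h.1]

end Resolvent

section Compression

variable {T P : L2op} {β z : ℂ}

theorem one_sub_smul_compression (hc : 1 - β * z ≠ 0) :
    1 - (z * (1 - β * z)⁻¹) • (P * T * P) = (1 - β * z)⁻¹ • (1 - z • (β • 1 + P * T * P)) := by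
  have h : (1 - β * z)⁻¹ * (1 - β * z) = 1 := inv_mul_cancel₀ hc
  linear_combination (norm := module) (-h) • (1 : L2op)

theorem mem_regularSet_mul_of_compression (hP : P * P = P) (hc : 1 - β * z ≠ 0)
    (hz : z ∈ regularSet (β • 1 + P * T * P)) : z * (1 - β * z)⁻¹ ∈ regularSet (P * T) := by
  have h : IsUnit (1 - (z * (1 - β * z)⁻¹) • (P * T) * P) := by
    rw [smul_mul_assoc, one_sub_smul_compression hc]
    exact hz.smul (Units.mk0 _ (inv_ne_zero hc))
  rwa [isUnit_one_sub_mul_comm, mul_smul_comm, ← mul_assoc, hP] at h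

theorem res_mul_proj_of_compression (hP : P * P = P) (hc : 1 - β * z ≠ 0) :
    res (P * T) (z * (1 - β * z)⁻¹) * P = (1 - β * z) • (P * res (β • 1 + P * T * P) z) := by
  have h := Ring.inverse_one_sub_mul_mul ((z * (1 - β * z)⁻¹) • (P * T)) P
  rw [mul_smul_comm, ← mul_assoc, hP, smul_mul_assoc, one_sub_smul_compression hc,
    Ring.inverse_smul (inv_ne_zero hc), inv_inv] at h
  rw [res, h, mul_smul_comm]
  rfl

theorem resKerN_sub_resKer (hP : P * P = P) (K : ℝ → ℝ → ℂ) (kt kt' : ℝ → L2) {τ s : ℝ}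
    (hs : |s| < τ) (hc : 1 - β * z ≠ 0) (t : ℝ) :
    resKerN T K kt kt' τ P (z * (1 - β * z)⁻¹) s t - resKer T K kt kt' z s t
      = z * inner ℂ (kt s) (P (res (β • 1 + P * T * P) z (kt' t)) - res T z (kt' t)) := by
  rw [resKerN, resKer, chi_eq_one hs, ← mul_apply_eq_comp (res _ _),
    res_mul_proj_of_compression hP hc, smul_apply, mul_apply_eq_comp,
    inner_smul_right, inner_sub_right]
  have hc' : 1 - z * β ≠ 0 := by rwa [mul_comm]
  field_simp
  ring

end Compression

theorem norm_smul_one_add_compression_le {T P : L2op} (hP : ‖P‖ ≤ 1) (c : ℂ) :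
    ‖c • 1 + P * T * P‖ ≤ ‖c‖ + ‖T‖ := by
  refine (norm_add_le _ _).trans (add_le_add ?_ ?_)
  · exact (norm_smul _ _).le.trans (mul_le_of_le_one_right (norm_nonneg _) norm_one_L2op_le)
  · calc ‖P * T * P‖ ≤ ‖P‖ * ‖T‖ * ‖P‖ := norm_mul₃_le
      _ ≤ 1 * ‖T‖ * 1 := by gcongr
      _ = ‖T‖ := by ring

theorem tendsto_smul_one_add_compression_apply {T : L2op} {P : ℕ → L2op} {b : ℕ → ℂ}
    (hb : Tendsto b atTop (𝓝 0)) (hPC : ∀ n, ‖P n‖ ≤ 1)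
    (hP : ∀ f, Tendsto (fun n => P n f) atTop (𝓝 f)) (f : L2) :
    Tendsto (fun n => (b n • 1 + P n * T * P n) f) atTop (𝓝 (T f)) := by
  have h := (hb.smul_const f).add <| tendsto_apply_of_tendsto_of_norm_le (A' := 1)
    (.of_forall hPC) hP ((T.continuous.tendsto f).comp (hP f))
  simpa [mul_apply_eq_comp] using h

theorem eventually_one_sub_mul_ne_zero {b : ℕ → ℂ} (hb : Tendsto b atTop (𝓝 0)) {Kc : Set ℂ}
    (hK : Bornology.IsBounded Kc) : ∀ᶠ n in atTop, ∀ z ∈ Kc, 1 - b n * z ≠ 0 := by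
  obtain ⟨D, hD⟩ := hK.exists_norm_le
  filter_upwards [(hb.norm.mul_const D).eventually_lt_const (u := 1) (by simp)] with n hn z hz h0
  have h1 : ‖b n * z‖ = 1 := by rw [← sub_eq_zero.1 h0, norm_one]
  have h2 : ‖b n * z‖ ≤ ‖b n‖ * D := by rw [norm_mul]; gcongr; exact hD z hz
  linarith

theorem tendstoUniformlyOn_proj_res_apply {S P : ℕ → L2op} {T : L2op} {C R : ℝ}
    (hSC : ∀ n, ‖S n‖ ≤ C) (hS : ∀ f, Tendsto (fun n => S n f) atTop (𝓝 (T f)))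
    (hPC : ∀ n, ‖P n‖ ≤ 1) (hP : ∀ f, Tendsto (fun n => P n f) atTop (𝓝 f))
    {Kc : Set ℂ} (hK : IsCompact Kc) (hT : ∀ z ∈ Kc, z ∈ regularSet T)
    (hR : ∀ᶠ n in atTop, ∀ z ∈ Kc, z ∈ regularSet (S n) ∧ ‖res (S n) z‖ ≤ R) (v : L2) :
    TendstoUniformlyOn (fun n z => P n (res (S n) z v)) (fun z => res T z v) atTop Kc := by
  set w : ℂ → L2 := fun z => res T z v
  have hw : ContinuousOn w Kc := fun z hz => by
    have h : ContinuousAt Ring.inverse (1 - z • T) := by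
      obtain ⟨u, hu⟩ := hT z hz
      exact hu ▸ NormedRing.inverse_continuousAt u
    exact ((h.comp (f := fun z : ℂ => 1 - z • T) (by fun_prop)).clm_apply
      continuousAt_const).continuousWithinAt
  obtain ⟨D, hD⟩ := hK.isBounded.exists_norm_le
  -- pairing `S n` with `P n` controls both error terms by one uniform convergence
  have hQ := tendstoUniformlyOn_of_tendsto_of_norm_le (A := fun n => (S n).prod (P n))
    (A' := fun f => (T f, f)) (C := max C 1)
    (fun n => (ContinuousLinearMap.opNorm_prod _ _).le.trans (max_le_max (hSC n) (hPC n)))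
    (fun f => (hS f).prodMk_nhds (hP f)) (hK.image_of_continuousOn hw)
  refine ((hQ.comp w).mono (Set.subset_preimage_image w Kc)).of_norm_sub_le (C := R * D + 1) ?_
  filter_upwards [hR] with n hn z hz
  obtain ⟨hreg, hres⟩ := hn z hz
  have hdiff : res (S n) z v - w z = res (S n) z (z • (S n (w z) - T (w z))) := by
    rw [← sub_apply, res, res, Ring.inverse_sub_inverse (iff_of_true hreg (hT z hz)),
      sub_sub_sub_cancel_left, ← smul_sub]
    rfl
  set e := ((S n).prod (P n) (w z) - (T (w z), w z))
  have hfst : ‖S n (w z) - T (w z)‖ ≤ ‖e‖ := norm_fst_le e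
  have hsnd : ‖P n (w z) - w z‖ ≤ ‖e‖ := norm_snd_le e
  have hR0 : 0 ≤ R := (norm_nonneg _).trans hres
  calc ‖P n (res (S n) z v) - w z‖ = ‖P n (res (S n) z v - w z) + (P n (w z) - w z)‖ := by
        rw [map_sub, sub_add_sub_cancel]
    _ ≤ ‖res (S n) z v - w z‖ + ‖P n (w z) - w z‖ := by
        grw [norm_add_le, (P n).le_of_opNorm_le (hPC n), one_mul]
    _ ≤ R * (D * ‖S n (w z) - T (w z)‖) + ‖P n (w z) - w z‖ := by
        rw [hdiff]
        grw [(res (S n) z).le_of_opNorm_le hres, norm_smul, hD z hz]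
    _ ≤ (R * D + 1) * ‖e‖ := by
        have := mul_le_mul_of_nonneg_left hfst (mul_nonneg hR0 ((norm_nonneg z).trans (hD z hz)))
        nlinarith

theorem statement8_general (T : L2op) (K : ℝ → ℝ → ℂ) (kt kt' : ℝ → L2)
    (tau : ℕ → ℝ) (P : ℕ → L2op) (hiv : ConditionIV K T tau P)
    (b : ℕ → ℂ) (hb : Tendsto b atTop (𝓝 (0 : ℂ)))
    (Kc : Set ℂ) (hKc : IsCompact Kc) (hKcsub : Kc ⊆ nablaS (fun n => b n • (1 : L2op) + P n * T * P n)) (s t : ℝ) :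
    (∀ᶠ n in atTop, ∀ lam ∈ Kc, lamn b lam n ∈ regularSet (P n * T)) ∧
    Tendsto (fun n => ⨆ lam ∈ Kc,
        ‖resKerN T K kt kt' (tau n) (P n) (lamn b lam n) s t
          - resKer T K kt kt' lam s t‖)
      atTop (𝓝 (0 : ℝ)) := by
  set S : ℕ → L2op := fun n => b n • (1 : L2op) + P n * T * P n
  have hchi : ∀ n, IsMulByChi (P n) (tau n) := hiv.proj
  have hPC n : ‖P n‖ ≤ 1 := (hchi n).opNorm_le_one
  have hP := tendsto_apply_of_isMulByChi hchi hiv.tendsto_top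
  have hS := tendsto_smul_one_add_compression_apply (T := T) hb hPC hP
  obtain ⟨B, hB⟩ := hb.norm.bddAbove_range
  have hSC n : ‖S n‖ ≤ B + ‖T‖ :=
    (norm_smul_one_add_compression_le (hPC n) _).trans (by gcongr; exact hB ⟨n, rfl⟩)
  have hT z (hz : z ∈ Kc) : z ∈ regularSet T := mem_regularSet_of_mem_nablaS hSC hS (hKcsub hz)
  obtain ⟨R, hR⟩ := exists_res_bound_of_isCompact hKc fun z hz => (hKcsub hz).1
  obtain ⟨D, hD⟩ := hKc.isBounded.exists_norm_le
  have hc := eventually_one_sub_mul_ne_zero hb hKc.isBounded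
  refine ⟨?_, ?_⟩
  · filter_upwards [hR, hc] with n h hc z hz
    exact mem_regularSet_mul_of_compression (hchi n).mul_self (hc z hz) (h z hz).1
  refine ((tendstoUniformlyOn_proj_res_apply hSC hS hPC hP hKc hT hR (kt' t)).of_norm_sub_le
    (C := D * ‖kt s‖) ?_).tendsto_biSup_norm_sub
  filter_upwards [hc, hiv.tendsto_top.eventually_gt_atTop |s|] with n hc hs z hz
  rw [lamn, resKerN_sub_resKer (hchi n).mul_self K kt kt' hs (hc z hz), norm_mul, mul_assoc D]
  exact mul_le_mul (hD z hz) (norm_inner_le_norm _ _) (norm_nonneg _)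
    ((norm_nonneg z).trans (hD z hz))

theorem statement8 (T : L2op) (K : ℝ → ℝ → ℂ) (kt kt' : ℝ → L2)
    (hK : IsK0Kernel K kt kt') (hT : IsInducedBy T K)
    (tau : ℕ → ℝ) (P : ℕ → L2op) (hiv : ConditionIV K T tau P)
    (b : ℕ → ℂ) (hb : Tendsto b atTop (𝓝 (0 : ℂ)))
    (Kc : Set ℂ) (hKc : IsCompact Kc) (hKcsub : Kc ⊆ nablaS (fun n => b n • (1 : L2op) + P n * T * P n)) (s t : ℝ) :
    (∀ᶠ n in atTop, ∀ lam ∈ Kc, lamn b lam n ∈ regularSet (P n * T)) ∧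
    Tendsto (fun n => ⨆ lam ∈ Kc,
        ‖resKerN T K kt kt' (tau n) (P n) (lamn b lam n) s t
          - resKer T K kt kt' lam s t‖)
      atTop (𝓝 (0 : ℝ)) :=
  statement8_general T K kt kt' tau P hiv b hb Kc hKc hKcsub s t
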